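/- arXiv:2009.00447 — 16 statements merged into one kernel-verified Lean document; each statement's English description precedes it below -/
import Mathlib

section
/- Let (V, E, σ) be a bi-transitive 2-colored bipartite digraph and let v₁ ≠ v₂ be vertices with σ(v₁) = σ(v₂). If there exist vertices u₁, u₂ (not necessarily distinct) such that E v₁ u₂, E v₂ u₁, E u₂ v₂ and E u₁ v₁ all hold, then v₁ and v₂ are equivalent. -/
/-- Out-neighborhood. -/
def Nout {V : Type*} (E : V → V → Prop) (u : V) : Set V := {v | E u v}

/-- In-neighborhood. -/
def Nin {V : Type*} (E : V → V → Prop) (u : V) : Set V := {v | E v u}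

/-- Out-neighborhood of a set of vertices. -/
def NoutSet {V : Type*} (E : V → V → Prop) (S : Set V) : Set V := {w | ∃ s ∈ S, E s w}

/-- Two vertices are equivalent if they have the same out- and in-neighbors. -/
def EquivVert {V : Type*} (E : V → V → Prop) (u v : V) : Prop :=
  Nout E u = Nout E v ∧ Nin E u = Nin E v

/-- Property N2: bi-transitivity. -/
def BiTrans {V : Type*} (E : V → V → Prop) : Prop :=
  ∀ u₁ v₁ u₂ v₂, E u₁ v₁ → E v₁ u₂ → E u₂ v₂ → E u₁ v₂

/-- Property N1. -/
def N1prop {V : Type*} (E : V → V → Prop) : Prop :=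
  ∀ u v, ¬ E u v → ¬ E v u →
    Nout E u ∩ NoutSet E (Nout E v) = ∅ ∧ Nout E v ∩ NoutSet E (Nout E u) = ∅

/-- Property N3. -/
def N3prop {V : Type*} (E : V → V → Prop) : Prop :=
  ∀ u v, u ∉ NoutSet E (Nout E v) → v ∉ NoutSet E (Nout E u) →
    (Nout E u ∩ Nout E v).Nonempty →
    Nin E u = Nin E v ∧ (Nout E u ⊆ Nout E v ∨ Nout E v ⊆ Nout E u)

/-- Property N4: sink-free. -/
def SinkFree {V : Type*} (E : V → V → Prop) : Prop := ∀ u, (Nout E u).Nonempty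

/-- `u` is strongly connected to `w`: there is a directed walk of length at least 1
from `u` to `w`. -/
def SConn {V : Type*} (E : V → V → Prop) (u w : V) : Prop :=
  ∃ (k : ℕ) (x : ℕ → V), 1 ≤ k ∧ x 0 = u ∧ x k = w ∧ ∀ i < k, E (x i) (x (i + 1))

theorem stmt_1 {V : Type*} (E : V → V → Prop) (σ : V → Bool)
    (hirr : ∀ u, ¬ E u u) (hbip : ∀ u v, E u v → σ u ≠ σ v)
    (hbt : BiTrans E) (v₁ v₂ : V) (hne : v₁ ≠ v₂) (hcol : σ v₁ = σ v₂)
    (u₁ u₂ : V) (h1 : E v₁ u₂) (h2 : E v₂ u₁) (h3 : E u₂ v₂) (h4 : E u₁ v₁) :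
    EquivVert E v₁ v₂ := by
  constructor
  · ext w
    exact ⟨fun h => hbt v₂ u₁ v₁ w h2 h4 h, fun h => hbt v₁ u₂ v₂ w h1 h3 h⟩
  · ext w
    exact ⟨fun h => hbt w v₁ u₂ v₂ h h1 h3, fun h => hbt w v₂ u₁ v₁ h h2 h4⟩
end

section
/- Let Δ = (V, E, σ) be a bi-transitive 2-colored bipartite digraph containing no two distinct equivalent vertices. Then no directed circuit of Δ has length greater than 2; that is, every closed directed walk in Δ whose edges are pairwise distinct has length at most 2. -/
theorem stmt_2 {V : Type*} (E : V → V → Prop) (σ : V → Bool)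
    (hirr : ∀ u, ¬ E u u) (hbip : ∀ u v, E u v → σ u ≠ σ v)
    (hbt : BiTrans E)
    (hnoeq : ∀ u v, EquivVert E u v → u = v)
    (k : ℕ) (x : ℕ → V) (hk : 1 ≤ k) (hclosed : x k = x 0)
    (hedges : ∀ i < k, E (x i) (x (i + 1)))
    (hdistinct : ∀ i < k, ∀ j < k, (x i, x (i + 1)) = (x j, x (j + 1)) → i = j) :
    k ≤ 2 := by
  by_contra h
  push_neg at h
  have hk3 : 3 ≤ k := h
  have hkpos : 0 < k := by omega
  set y : ℕ → V := fun i => x (i % k) with hy_def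
  -- y is an edge-walk for all i
  have hy : ∀ i, E (y i) (y (i + 1)) := by
    intro i
    have hlt : i % k < k := Nat.mod_lt _ hkpos
    have hmod : (i + 1) % k = (i % k + 1) % k := by
      conv_lhs => rw [Nat.add_mod]
      have : 1 % k = 1 := Nat.mod_eq_of_lt (by omega)
      rw [this]
    by_cases hc : i % k + 1 = k
    · have h0 : (i + 1) % k = 0 := by rw [hmod, hc, Nat.mod_self]
      have he := hedges (i % k) hlt
      rw [hc, hclosed] at he
      simpa [hy_def, h0] using he
    · have h0 : (i + 1) % k = i % k + 1 := by
        rw [hmod]; exact Nat.mod_eq_of_lt (by omega)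
      have he := hedges (i % k) hlt
      simpa [hy_def, h0] using he
  have hperiod : ∀ i, y (i + k) = y i := by
    intro i; simp [hy_def, Nat.add_mod_right]
  -- parity: k is even
  have hflip : ∀ i, σ (y i) ≠ σ (y (i + 1)) := fun i => hbip _ _ (hy i)
  have hbool : ∀ a b c : Bool, a ≠ b → b ≠ c → a = c := by decide
  have h2 : ∀ i, σ (y (i + 2)) = σ (y i) := by
    intro i
    exact (hbool _ _ _ (hflip i) (hflip (i + 1))).symm
  have heven2 : ∀ m i, σ (y (i + 2 * m)) = σ (y i) := by
    intro m
    induction m with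
    | zero => intro i; simp
    | succ n ih =>
      intro i
      have : i + 2 * (n + 1) = (i + 2) + 2 * n := by ring
      rw [this, ih (i + 2), h2 i]
  have hyk : y k = y 0 := by simp [hy_def, Nat.mod_self, hclosed]
  have hkeven : Even k := by
    rcases Nat.even_or_odd k with he | ho
    · exact he
    · exfalso
      obtain ⟨m, hm⟩ := ho
      have : σ (y k) = σ (y 1) := by
        rw [hm, show 2 * m + 1 = 1 + 2 * m by ring]; exact heven2 m 1
      rw [hyk] at this
      exact hflip 0 (by simpa using this)
  obtain ⟨m, hm⟩ : ∃ m, k = 2 + 2 * m := by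
    obtain ⟨c, hc⟩ := hkeven
    exact ⟨c - 1, by omega⟩
  -- bitransitivity propagation lemmas
  have hA2 : ∀ i w, E (y (i + 2)) w → E (y i) w := fun i w hw =>
    hbt _ _ _ _ (hy i) (hy (i + 1)) hw
  have hB2 : ∀ i w, E w (y i) → E w (y (i + 2)) := fun i w hw =>
    hbt _ _ _ _ hw (hy i) (hy (i + 1))
  have hA : ∀ m i w, E (y (i + 2 * m)) w → E (y i) w := by
    intro m
    induction m with
    | zero => intro i w hw; simpa using hw
    | succ n ih =>
      intro i w hw
      have : i + 2 * (n + 1) = (i + 2) + 2 * n := by ring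
      rw [this] at hw
      exact hA2 i w (ih (i + 2) w hw)
  have hB : ∀ m i w, E w (y i) → E w (y (i + 2 * m)) := by
    intro m
    induction m with
    | zero => intro i w hw; simpa using hw
    | succ n ih =>
      intro i w hw
      have : i + 2 * (n + 1) = (i + 2 * n) + 2 := by ring
      rw [this]
      exact hB2 _ w (ih i w hw)
  -- every vertex equals the one two steps later
  have key : ∀ i, y i = y (i + 2) := by
    intro i
    apply hnoeq
    constructor
    · ext v
      simp only [Nout, Set.mem_setOf_eq]
      constructor
      · intro hv
        have hvk : E (y (i + k)) v := by rw [hperiod]; exact hv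
        have : i + k = (i + 2) + 2 * m := by omega
        rw [this] at hvk
        exact hA m (i + 2) v hvk
      · intro hv
        exact hA2 i v hv
    · ext v
      simp only [Nin, Set.mem_setOf_eq]
      constructor
      · intro hv
        exact hB2 i v hv
      · intro hv
        have := hB m (i + 2) v hv
        have heq : (i + 2) + 2 * m = i + k := by omega
        rw [heq, hperiod] at this
        exact this
  -- conclude by edge distinctness
  have hy0 : y 0 = x 0 := by simp [hy_def]
  have hy1 : y 1 = x 1 := by simp [hy_def, Nat.mod_eq_of_lt (show 1 < k by omega)]
  have hy2 : y 2 = x 2 := by simp [hy_def, Nat.mod_eq_of_lt (show 2 < k by omega)]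
  have hy3 : y 3 = x 3 := by simp [hy_def, Nat.mod_eq_of_lt (show 3 < k by omega)]
  have := hdistinct 0 hkpos 2 (by omega) (by
    rw [show (0:ℕ) + 1 = 1 by rfl, show (2:ℕ) + 1 = 3 by rfl]
    rw [← hy0, ← hy1, ← hy2, ← hy3, ← key 0, ← key 1])
  omega
end

section
/- Let Δ = (V, E, σ) be a bi-transitive 2-colored bipartite digraph and let (V, E′) be a ∼-consistent underlying oriented digraph of Δ. Then (V, E′) is acyclic: there is no directed cycle with respect to E′, i.e., no vertices x₀, x₁, …, xₖ = x₀ with k ≥ 1, E′ xᵢ xᵢ₊₁ for all 0 ≤ i < k, and x₀, …, x_{k−1} pairwise distinct. -/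
theorem stmt_3 {V : Type*} (E : V → V → Prop) (σ : V → Bool)
    (hirr : ∀ u, ¬ E u u) (hbip : ∀ u v, E u v → σ u ≠ σ v)
    (hbt : BiTrans E) (E' : V → V → Prop)
    (hsub : ∀ u v, E' u v → E u v)
    (horient : ∀ u v, E' u v → ¬ E' v u)
    (hcover : ∀ u v, E u v → E' u v ∨ E' v u)
    (hcons : ∀ u u' v v', EquivVert E u u' → EquivVert E v v' → (E' u v ↔ E' u' v')) :
    ¬ ∃ (k : ℕ) (x : ℕ → V), 1 ≤ k ∧ x k = x 0 ∧
      (∀ i < k, E' (x i) (x (i + 1))) ∧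
      (∀ i < k, ∀ j < k, x i = x j → i = j) := by
  rintro ⟨k, x, hk, hclose, hedge, -⟩
  set y : ℕ → V := fun i => x (i % k) with hy
  have hyE' : ∀ i, E' (y i) (y (i + 1)) := by
    intro i
    have h1 : i % k < k := Nat.mod_lt _ hk
    have h2 : y (i + 1) = x (i % k + 1) := by
      have key : (i + 1) % k = (i % k + 1) % k := by
        conv_lhs => rw [Nat.add_mod]
        conv_rhs => rw [Nat.add_mod, Nat.mod_mod_of_dvd i (dvd_refl k)]
      by_cases h : i % k + 1 = k
      · have hm : (i + 1) % k = 0 := by rw [key, h, Nat.mod_self]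
        simp only [hy, hm]
        rw [← hclose, h]
      · have hm : (i + 1) % k = i % k + 1 := by
          rw [key, Nat.mod_eq_of_lt (by omega)]
        simp only [hy, hm]
    rw [h2]
    exact hedge _ h1
  have hyE : ∀ i, E (y i) (y (i + 1)) := fun i => hsub _ _ (hyE' i)
  -- odd-length jumps
  have hodd : ∀ m i, E (y i) (y (i + 2 * m + 1)) := by
    intro m
    induction m with
    | zero => intro i; simpa using hyE i
    | succ n ih =>
      intro i
      have h1 := ih i
      have h2 := hyE (i + 2 * n + 1)
      have h3 := hyE (i + 2 * n + 1 + 1)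
      have h4 := hbt _ _ _ _ h1 h2 h3
      have heq : i + 2 * (n + 1) + 1 = i + 2 * n + 1 + 1 + 1 := by ring
      rw [heq]
      exact h4
  -- parity of colors
  have hpar : ∀ i, σ (y i) = (if Even i then σ (y 0) else !(σ (y 0))) := by
    intro i
    induction i with
    | zero => simp
    | succ n ih =>
      have h := hbip _ _ (hyE n)
      have h2 : σ (y (n + 1)) = ! σ (y n) := by
        cases hA : σ (y (n + 1)) <;> cases hB : σ (y n) <;> simp_all
      rw [h2, ih]
      rcases Nat.even_or_odd n with he | ho
      · simp [he, Nat.even_add_one]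
      · simp [Nat.even_add_one, Nat.not_even_iff_odd.mpr ho]
  have hy0 : y k = y 0 := by simp only [hy, Nat.mod_self, Nat.zero_mod]
  have hkeven : Even k := by
    by_contra hne
    have := hpar k
    rw [hy0, if_neg hne] at this
    simp at this
  have hk2 : 2 ≤ k := by
    obtain ⟨c, hc⟩ := hkeven; omega
  obtain ⟨m, hm⟩ : ∃ m, k = 2 * m + 2 := by
    obtain ⟨c, hc⟩ := hkeven; exact ⟨c - 1, by omega⟩
  -- key edges
  have e01 : E (y 0) (y 1) := hyE 0
  have e12 : E (y 1) (y 2) := hyE 1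
  have hyk1 : y (k + 1) = y 1 := by
    simp only [hy]
    congr 1
    rw [Nat.add_mod_left]
  have e21 : E (y 2) (y 1) := by
    have h := hodd m 2
    have heq : 2 + 2 * m + 1 = k + 1 := by omega
    rw [heq, hyk1] at h
    exact h
  have e10 : E (y 1) (y 0) := by
    have h := hodd m 1
    have heq : 1 + 2 * m + 1 = k := by omega
    rw [heq, hy0] at h
    exact h
  -- y 2 is equivalent to y 0
  have hequiv : EquivVert E (y 2) (y 0) := by
    constructor
    · ext v
      simp only [Nout, Set.mem_setOf_eq]
      exact ⟨fun h => hbt _ _ _ _ e01 e12 h, fun h => hbt _ _ _ _ e21 e10 h⟩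
    · ext v
      simp only [Nin, Set.mem_setOf_eq]
      exact ⟨fun h => hbt _ _ _ _ h e21 e10, fun h => hbt _ _ _ _ h e01 e12⟩
  have hiff := hcons (y 2) (y 0) (y 1) (y 1) hequiv ⟨rfl, rfl⟩
  have h01 : E' (y 0) (y 1) := hyE' 0
  have h21 : E' (y 2) (y 1) := hiff.mpr h01
  exact horient _ _ (hyE' 1) h21
end

section
/- Let Δ = (V, E, σ) be a bi-transitive 2-colored bipartite digraph containing no two distinct equivalent vertices. Then every directed cycle of Δ has length exactly 2; that is, every directed cycle is of the form u → v → u and is induced by a symmetric edge. -/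
theorem stmt_4 {V : Type*} (E : V → V → Prop) (σ : V → Bool)
    (hirr : ∀ u, ¬ E u u) (hbip : ∀ u v, E u v → σ u ≠ σ v)
    (hbt : BiTrans E)
    (hnoeq : ∀ u v, EquivVert E u v → u = v)
    (k : ℕ) (x : ℕ → V) (hk : 1 ≤ k) (hclosed : x k = x 0)
    (hedges : ∀ i < k, E (x i) (x (i + 1)))
    (hdistinct : ∀ i < k, ∀ j < k, x i = x j → i = j) :
    k = 2 ∧ E (x 0) (x 1) ∧ E (x 1) (x 0) := by
  set y : ℕ → V := fun n => x (n % k) with hy_def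
  have hy : ∀ n, E (y n) (y (n + 1)) := by
    intro n
    have hlt : n % k < k := Nat.mod_lt _ (by omega)
    by_cases hcase : n % k + 1 = k
    · have h1 : (n + 1) % k = 0 := by
        rw [← Nat.mod_add_mod, hcase, Nat.mod_self]
      have := hedges (n % k) hlt
      simp only [hy_def, h1, hcase] at *
      rw [hclosed] at this
      exact this
    · have h1 : (n + 1) % k = n % k + 1 := by
        rw [← Nat.mod_add_mod]; exact Nat.mod_eq_of_lt (by omega)
      have := hedges (n % k) hlt
      simp only [hy_def, h1]
      exact this
  have hodd : ∀ n m, E (y n) (y (n + (2 * m + 1))) := by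
    intro n m
    induction m with
    | zero => simpa using hy n
    | succ m ih =>
      have h1 := hy (n + (2 * m + 1))
      have h2 := hy (n + (2 * m + 1) + 1)
      have := hbt _ _ _ _ ih h1 h2
      have heq : n + (2 * m + 1) + 1 + 1 = n + (2 * (m + 1) + 1) := by ring
      rwa [heq] at this
  have hyk : y k = x 0 := by simp [hy_def]
  have hy0 : y 0 = x 0 := by simp [hy_def, Nat.mod_eq_of_lt hk]
  -- k is even
  have hkeven : k % 2 = 0 := by
    by_contra hoddk
    obtain ⟨m, hm⟩ : ∃ m, k = 2 * m + 1 := ⟨k / 2, by omega⟩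
    have := hodd 0 m
    rw [show 0 + (2 * m + 1) = k by omega, hyk, hy0] at this
    exact hirr _ this
  rcases Nat.lt_or_ge k 4 with hk4 | hk4
  · -- k = 2
    have hk2 : k = 2 := by omega
    subst hk2
    have e01 := hedges 0 (by omega)
    have e12 := hedges 1 (by omega)
    rw [hclosed] at e12
    exact ⟨rfl, e01, e12⟩
  · -- k ≥ 4: derive contradiction via equivalence of x 0 and x 2
    exfalso
    have h0 : (0 : ℕ) % k = 0 := Nat.mod_eq_of_lt (by omega)
    have e01 := hedges 0 (by omega)
    have e12 := hedges 1 (by omega)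
    have e23 := hedges 2 (by omega)
    have e30 : E (x 3) (x 0) := by
      obtain ⟨m, hm⟩ : ∃ m, k = 2 * m := ⟨k / 2, by omega⟩
      have := hodd 3 (m - 2)
      rw [show 3 + (2 * (m - 2) + 1) = k by omega, hyk] at this
      simpa [hy_def, Nat.mod_eq_of_lt (show 3 < k by omega)] using this
    have hequiv : EquivVert E (x 0) (x 2) := by
      constructor
      · ext w
        constructor
        · intro h; exact hbt _ _ _ _ e23 e30 h
        · intro h; exact hbt _ _ _ _ e01 e12 h
      · ext w
        constructor
        · intro h; exact hbt _ _ _ _ h e01 e12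
        · intro h; exact hbt _ _ _ _ h e23 e30
    have := hdistinct 0 (by omega) 2 (by omega) (hnoeq _ _ hequiv)
    omega
end

section
/- Let Δ = (V, E, σ) be a bi-transitive 2-colored bipartite digraph and let v₁ → u₁ → v₂ → u₂ → ⋯ → vₙ → uₙ → v₁ be a closed directed walk of length 2n with n ≥ 2 (that is, E vᵢ uᵢ for all 1 ≤ i ≤ n, E uᵢ vᵢ₊₁ for 1 ≤ i < n, and E uₙ v₁). Then for all 1 ≤ i, j ≤ n both E vᵢ uⱼ and E uᵢ vⱼ hold; in other words, the subgraph of Δ induced on {u₁, …, uₙ, v₁, …, vₙ} is a complete bipartite digraph with color classes {u₁, …, uₙ} and {v₁, …, vₙ}. -/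
theorem stmt_5 {V : Type*} (E : V → V → Prop) (σ : V → Bool)
    (hirr : ∀ u, ¬ E u u) (hbip : ∀ u v, E u v → σ u ≠ σ v)
    (hbt : BiTrans E)
    (n : ℕ) (hn : 2 ≤ n) (v u : ℕ → V)
    (h1 : ∀ i < n, E (v i) (u i))
    (h2 : ∀ i, i + 1 < n → E (u i) (v (i + 1)))
    (h3 : E (u (n - 1)) (v 0)) :
    ∀ i < n, ∀ j < n, E (v i) (u j) ∧ E (u i) (v j) := by
  have hnpos : 0 < n := by omega
  have hwrap : ∀ i < n, E (u i) (v ((i + 1) % n)) := by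
    intro i hi
    rcases Nat.lt_or_ge (i + 1) n with h | h
    · rw [Nat.mod_eq_of_lt h]; exact h2 i h
    · have hie : i = n - 1 := by omega
      subst hie
      have : (n - 1 + 1) % n = 0 := by
        have hh : n - 1 + 1 = n := by omega
        rw [hh, Nat.mod_self]
      rw [this]; exact h3
  have heq1 : ∀ m : ℕ, (m % n + 1) % n = (m + 1) % n := by
    intro m
    conv_rhs => rw [Nat.add_mod, Nat.mod_eq_of_lt (show 1 < n by omega)]
  have hv : ∀ i < n, ∀ k, E (v i) (u ((i + k) % n)) := by
    intro i hi k
    induction k with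
    | zero => simpa [Nat.mod_eq_of_lt hi] using h1 i hi
    | succ k ih =>
      have hjn : (i + k) % n < n := Nat.mod_lt _ hnpos
      have e1 := hwrap _ hjn
      have hnext : ((i + k) % n + 1) % n < n := Nat.mod_lt _ hnpos
      have e2 := h1 _ hnext
      have hres := hbt _ _ _ _ ih e1 e2
      have heq : ((i + k) % n + 1) % n = (i + (k + 1)) % n := by
        rw [heq1, ← Nat.add_assoc]
      rwa [heq] at hres
  have hu : ∀ i < n, ∀ k, E (u i) (v ((i + 1 + k) % n)) := by
    intro i hi k
    induction k with
    | zero => simpa using hwrap i hi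
    | succ k ih =>
      have hjn : (i + 1 + k) % n < n := Nat.mod_lt _ hnpos
      have e1 := h1 _ hjn
      have e2 := hwrap _ hjn
      have hres := hbt _ _ _ _ ih e1 e2
      have heq : ((i + 1 + k) % n + 1) % n = (i + 1 + (k + 1)) % n := by
        rw [heq1, ← Nat.add_assoc]
      rwa [heq] at hres
  intro i hi j hj
  constructor
  · have := hv i hi (n - i + j)
    have heq : (i + (n - i + j)) % n = j := by
      have h1' : i + (n - i + j) = n + j := by omega
      rw [h1', Nat.add_mod_left, Nat.mod_eq_of_lt hj]
    rwa [heq] at this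
  · have := hu i hi (2 * n - (i + 1) + j)
    have heq : (i + 1 + (2 * n - (i + 1) + j)) % n = j := by
      have h1' : i + 1 + (2 * n - (i + 1) + j) = 2 * n + j := by omega
      rw [h1', two_mul, Nat.add_assoc, Nat.add_mod_left, Nat.add_mod_left, Nat.mod_eq_of_lt hj]
    rwa [heq] at this
end

section
/- Let Δ = (V, E, σ) be a bi-transitive 2-colored bipartite digraph in which no two symmetric edges have a common endpoint (i.e., whenever E u v₁, E v₁ u, E u v₂ and E v₂ u all hold, v₁ = v₂). Then Δ has no directed circuit of length at least 4. -/
theorem stmt_7 {V : Type*} (E : V → V → Prop) (σ : V → Bool)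
    (hirr : ∀ u, ¬ E u u) (hbip : ∀ u v, E u v → σ u ≠ σ v)
    (hbt : BiTrans E)
    (hsym : ∀ u v₁ v₂, E u v₁ → E v₁ u → E u v₂ → E v₂ u → v₁ = v₂)
    (k : ℕ) (x : ℕ → V) (hk : 1 ≤ k) (hclosed : x k = x 0)
    (hedges : ∀ i < k, E (x i) (x (i + 1)))
    (hdistinct : ∀ i < k, ∀ j < k, (x i, x (i + 1)) = (x j, x (j + 1)) → i = j) :
    k < 4 := by
  by_contra hcon
  push_neg at hcon
  have hk4 : 4 ≤ k := hcon
  -- parity of colors along the walk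
  have hpar : ∀ i ≤ k, σ (x i) = (if i % 2 = 0 then σ (x 0) else !(σ (x 0))) := by
    intro i hi
    induction i with
    | zero => simp
    | succ n ih =>
      have h1 := ih (by omega)
      have h2 := hbip _ _ (hedges n (by omega))
      have h3 : σ (x (n+1)) = ! σ (x n) := by
        revert h2; cases σ (x n) <;> cases σ (x (n+1)) <;> simp
      rw [h3, h1]
      by_cases hn2 : n % 2 = 0
      · simp [hn2, show (n+1) % 2 = 1 from by omega]
      · simp [show n % 2 = 1 from by omega, show (n+1) % 2 = 0 from by omega]
  have hk2 : k % 2 = 0 := by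
    by_contra hodd
    have := hpar k le_rfl
    rw [hclosed, if_neg hodd] at this
    revert this; cases σ (x 0) <;> simp
  -- periodic edges
  have hE : ∀ i, E (x (i % k)) (x ((i+1) % k)) := by
    intro i
    have hr : i % k < k := Nat.mod_lt _ (by omega)
    have he := hedges (i % k) hr
    have e1 : (i+1) % k = (i % k + 1) % k := by
      rw [Nat.add_mod, Nat.mod_eq_of_lt (show 1 < k by omega)]
    by_cases h1 : i % k + 1 = k
    · have h0 : (i+1) % k = 0 := by rw [e1, h1, Nat.mod_self]
      rw [h0, ← hclosed]
      rwa [h1] at he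
    · have h0 : (i+1) % k = i % k + 1 := by
        rw [e1]; exact Nat.mod_eq_of_lt (by omega)
      rw [h0]
      exact he
  -- long odd jumps
  have hoddE : ∀ m i, E (x (i % k)) (x ((i + (2*m+1)) % k)) := by
    intro m
    induction m with
    | zero => intro i; simpa using hE i
    | succ n ih =>
      intro i
      have h1 := ih i
      have h2 := hE (i + (2*n+1))
      have h3 := hE (i + (2*n+1) + 1)
      rw [show i + (2*n+1) + 1 + 1 = i + (2*(n+1)+1) from by ring] at h3
      exact hbt _ _ _ _ h1 h2 h3
  have m1 : (1 : ℕ) % k = 1 := Nat.mod_eq_of_lt (by omega)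
  have m2 : (2 : ℕ) % k = 2 := Nat.mod_eq_of_lt (by omega)
  have m3 : (3 : ℕ) % k = 3 := Nat.mod_eq_of_lt (by omega)
  have a01 : E (x 0) (x 1) := hedges 0 (by omega)
  have a12 : E (x 1) (x 2) := hedges 1 (by omega)
  have a10 : E (x 1) (x 0) := by
    have := hoddE ((k-2)/2) 1
    rwa [m1, show 1 + (2*((k-2)/2)+1) = k from by omega, Nat.mod_self] at this
  have a21 : E (x 2) (x 1) := by
    have := hoddE ((k-2)/2) 2
    rwa [m2, show 2 + (2*((k-2)/2)+1) = k + 1 from by omega,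
      Nat.add_mod_left, m1] at this
  have a03 : E (x 0) (x 3) := by
    have := hoddE 1 0
    rwa [Nat.zero_mod, show 0 + (2*1+1) = 3 from by omega, m3] at this
  have a30 : E (x 3) (x 0) := by
    have := hoddE ((k-4)/2) 3
    rwa [m3, show 3 + (2*((k-4)/2)+1) = k from by omega, Nat.mod_self] at this
  have e02 : x 0 = x 2 := hsym (x 1) (x 0) (x 2) a10 a01 a12 a21
  have e13 : x 1 = x 3 := hsym (x 0) (x 1) (x 3) a01 a10 a03 a30
  have := hdistinct 0 (by omega) 2 (by omega) (by rw [← e02, ← e13])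
  omega
end

section
/- Let Δ = (V, E, σ) be a bi-transitive, sink-free 2-colored bipartite digraph. For any two vertices u and v, if N(u) ∩ N(v) = ∅, then N(N(u)) ∩ N(N(v)) = ∅. -/
theorem stmt_8 {V : Type*} (E : V → V → Prop) (σ : V → Bool)
    (hirr : ∀ u, ¬ E u u) (hbip : ∀ u v, E u v → σ u ≠ σ v)
    (hbt : BiTrans E) (hsf : SinkFree E)
    (u v : V) (h : Nout E u ∩ Nout E v = ∅) :
    NoutSet E (Nout E u) ∩ NoutSet E (Nout E v) = ∅ := by
  ext w
  simp only [Set.mem_inter_iff, Set.mem_empty_iff_false, iff_false, not_and]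
  rintro ⟨a, ha, haw⟩ ⟨b, hb, hbw⟩
  obtain ⟨z, hz⟩ := hsf w
  have h1 : E u z := hbt u a w z ha haw hz
  have h2 : E v z := hbt v b w z hb hbw hz
  have : z ∈ Nout E u ∩ Nout E v := ⟨h1, h2⟩
  rw [h] at this
  exact this
end

section
/- Let Δ = (V, E, σ) be a bi-transitive, sink-free 2-colored bipartite digraph and let u, v, w be vertices such that σ(u) = σ(v) and N(u) ∩ N(v) = ∅. Then u and v are not both strongly connected to w; that is, either there is no directed walk of length at least 1 from u to w, or there is no directed walk of length at least 1 from v to w. -/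
lemma sconn_reduce {V : Type*} (E : V → V → Prop) (hbt : BiTrans E)
    {u w : V} (hs : SConn E u w) : E u w ∨ ∃ z, E u z ∧ E z w := by
  obtain ⟨k, x, hk, hx0, hxk, hE⟩ := hs
  induction k using Nat.strong_induction_on generalizing x with
  | _ k ih =>
    rcases k with _ | _ | _ | n
    · omega
    · exact Or.inl (hx0 ▸ hxk ▸ hE 0 (by omega))
    · exact Or.inr ⟨x 1, hx0 ▸ hE 0 (by omega), hxk ▸ hE 1 (by omega)⟩
    · have h03 : E (x 0) (x 3) :=
        hbt _ _ _ _ (hE 0 (by omega)) (hE 1 (by omega)) (hE 2 (by omega))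
      set y : ℕ → V := fun i => if i = 0 then x 0 else x (i + 2) with hy
      refine ih (n+1) (by omega) y (by omega) hx0 ?_ ?_
      · simp only [hy]
        norm_num
        exact hxk
      · intro i hi
        match i with
        | 0 => simpa [hy] using h03
        | (j+1) =>
          have := hE (j + 3) (by omega)
          simp only [hy]
          norm_num
          convert this using 3 <;> omega

theorem stmt_9 {V : Type*} (E : V → V → Prop) (σ : V → Bool)
    (hirr : ∀ u, ¬ E u u) (hbip : ∀ u v, E u v → σ u ≠ σ v)
    (hbt : BiTrans E) (hsf : SinkFree E)
    (u v w : V) (hcol : σ u = σ v) (h : Nout E u ∩ Nout E v = ∅) :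
    ¬ SConn E u w ∨ ¬ SConn E v w := by
  by_contra hc
  push_neg at hc
  obtain ⟨hu, hv⟩ := hc
  have hu' := sconn_reduce E hbt hu
  have hv' := sconn_reduce E hbt hv
  have hne : ∀ t, ¬ (E u t ∧ E v t) := by
    intro t ht
    have : t ∈ Nout E u ∩ Nout E v := ⟨ht.1, ht.2⟩
    rw [h] at this
    exact this
  rcases hu' with huw | ⟨z, huz, hzw⟩
  · rcases hv' with hvw | ⟨z', hvz', hz'w⟩
    · obtain ⟨t, hwt⟩ := hsf w
      obtain ⟨s, hts⟩ := hsf t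
      exact hne s ⟨hbt _ _ _ _ huw hwt hts, hbt _ _ _ _ hvw hwt hts⟩
    · have h1 : σ u ≠ σ w := hbip _ _ huw
      have h2 : σ v ≠ σ z' := hbip _ _ hvz'
      have h3 : σ z' ≠ σ w := hbip _ _ hz'w
      revert h1 h2 h3 hcol
      cases σ u <;> cases σ v <;> cases σ w <;> cases σ z' <;> simp
  · rcases hv' with hvw | ⟨z', hvz', hz'w⟩
    · have h1 : σ v ≠ σ w := hbip _ _ hvw
      have h2 : σ u ≠ σ z := hbip _ _ huz
      have h3 : σ z ≠ σ w := hbip _ _ hzw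
      revert h1 h2 h3 hcol
      cases σ u <;> cases σ v <;> cases σ w <;> cases σ z <;> simp
    · obtain ⟨t, hwt⟩ := hsf w
      exact hne t ⟨hbt _ _ _ _ huz hzw hwt, hbt _ _ _ _ hvz' hz'w hwt⟩
end

section
/- Let Δ = (V, E, σ) be a bi-transitive 2-colored bipartite digraph and let u ≠ v be two vertices. Then u is strongly connected to v if and only if either E u v holds, or there exists a vertex w with E u w and E w v. -/
lemma shorten {V : Type*} {E : V → V → Prop} (hbt : BiTrans E) :
    ∀ k, ∀ u v : V, ∀ x : ℕ → V, 1 ≤ k → x 0 = u → x k = v →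
      (∀ i < k, E (x i) (x (i + 1))) → (E u v ∨ ∃ w, E u w ∧ E w v) := by
  intro k
  induction k using Nat.strong_induction_on with
  | _ k ih =>
    intro u v x hk h0 hkv hE
    match k, hk with
    | 1, _ =>
      left; have := hE 0 (by norm_num); rwa [h0, show (0:ℕ)+1 = 1 from rfl, hkv] at this
    | 2, _ =>
      right; exact ⟨x 1, by have := hE 0 (by norm_num); rwa [h0] at this,
        by have := hE 1 (by norm_num); rwa [show (1:ℕ)+1 = 2 from rfl, hkv] at this⟩
    | (n+3), _ =>
      have e03 : E u (x 3) := by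
        have h0' := hE 0 (by omega); have h1 := hE 1 (by omega); have h2 := hE 2 (by omega)
        rw [h0] at h0'
        exact hbt _ _ _ _ h0' h1 h2
      refine ih (n+1) (by omega) u v (fun i => if i = 0 then u else x (i + 2))
        (by omega) (by simp) ?_ ?_
      · simp only [if_neg (by omega : n+1 ≠ 0)]
        rw [show n+1+2 = n+3 from rfl, hkv]
      · intro i hi
        rcases Nat.eq_zero_or_pos i with h | h
        · subst h; simpa using e03
        · simp only [if_neg (by omega : i ≠ 0), if_neg (by omega : i+1 ≠ 0)]
          exact hE (i+2) (by omega)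

theorem stmt_11 {V : Type*} (E : V → V → Prop) (σ : V → Bool)
    (hirr : ∀ u, ¬ E u u) (hbip : ∀ u v, E u v → σ u ≠ σ v)
    (hbt : BiTrans E)
    (u v : V) (hne : u ≠ v) :
    SConn E u v ↔ (E u v ∨ ∃ w, E u w ∧ E w v) := by
  constructor
  · rintro ⟨k, x, hk, h0, hkv, hE⟩
    exact shorten hbt k u v x hk h0 hkv hE
  · rintro (h | ⟨w, h1, h2⟩)
    · exact ⟨1, fun i => if i = 0 then u else v, le_refl 1, by simp, by simp, by
        intro i hi; interval_cases i; simpa using h⟩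
    · exact ⟨2, fun i => if i = 0 then u else if i = 1 then w else v, by norm_num, by simp,
        by simp, by intro i hi; interval_cases i <;> simpa⟩
end

section
/- Let (V, E, σ) be a 2-colored bipartite digraph satisfying property N1. Let u, w, v, z be four pairwise distinct vertices with σ(u) = σ(w), σ(v) = σ(z), and σ(u) ≠ σ(v), such that both E w z and E z w hold (so {w, z} is a symmetric edge), N(u) and N(v) each contain exactly one element, and E u z holds. Then E v w does not hold. -/
theorem stmt_12 {V : Type*} (E : V → V → Prop) (σ : V → Bool)
    (hirr : ∀ u, ¬ E u u) (hbip : ∀ u v, E u v → σ u ≠ σ v)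
    (hN1 : N1prop E)
    (u w v z : V)
    (hdist : u ≠ w ∧ u ≠ v ∧ u ≠ z ∧ w ≠ v ∧ w ≠ z ∧ v ≠ z)
    (hcol1 : σ u = σ w) (hcol2 : σ v = σ z) (hcol3 : σ u ≠ σ v)
    (hwz : E w z) (hzw : E z w)
    (hu1 : ∃ a, Nout E u = {a}) (hv1 : ∃ a, Nout E v = {a})
    (huz : E u z) :
    ¬ E v w := by
  intro hvw
  obtain ⟨a, ha⟩ := hu1
  obtain ⟨b, hb⟩ := hv1
  have hNu : Nout E u = {z} := by
    have : z ∈ Nout E u := huz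
    rw [ha] at this ⊢; simp at this; rw [this]
  have hNv : Nout E v = {w} := by
    have : w ∈ Nout E v := hvw
    rw [hb] at this ⊢; simp at this; rw [this]
  have huv : ¬ E u v := fun h => hdist.2.2.2.2.2 (by
    have : v ∈ Nout E u := h; rw [hNu] at this; exact this.symm ▸ rfl)
  have hvu : ¬ E v u := fun h => hdist.1 (by
    have : u ∈ Nout E v := h; rw [hNv] at this; exact this)
  have := (hN1 u v huv hvu).1
  have hz : z ∈ Nout E u ∩ NoutSet E (Nout E v) :=
    ⟨huz, ⟨w, by rw [hNv]; exact rfl, hwz⟩⟩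
  rw [this] at hz
  exact hz
end

section
/- Let Δ = (V, E, σ) be a bi-transitive, sink-free 2-colored bipartite digraph satisfying property N1, and let u, v be vertices with σ(u) ≠ σ(v) that are independent (¬E u v and ¬E v u). Then for every vertex w, u and v are not both strongly connected to w. -/
lemma walk_key {V : Type*} (E : V → V → Prop) (hbt : BiTrans E) :
    ∀ k (x : ℕ → V), 1 ≤ k → (∀ i < k, E (x i) (x (i + 1))) →
      (Odd k ∧ E (x 0) (x k)) ∨ (Even k ∧ ∃ y, E (x 0) y ∧ E y (x k)) := by
  intro k
  induction k with
  | zero => intro x h; omega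
  | succ n ih =>
    intro x h hx
    rcases Nat.eq_or_lt_of_le h with h1 | h1
    · left
      have hn0 : n = 0 := by omega
      subst hn0
      exact ⟨odd_one, hx 0 (by omega)⟩
    · have hn : 1 ≤ n := by omega
      have hlast : E (x n) (x (n + 1)) := hx n (by omega)
      rcases ih x hn (fun i hi => hx i (by omega)) with ⟨ho, he⟩ | ⟨hev, y, hy1, hy2⟩
      · right
        exact ⟨by simpa using ho.add_one, x n, he, hlast⟩
      · left
        exact ⟨by simpa using hev.add_one, hbt _ _ _ _ hy1 hy2 hlast⟩

lemma walk_color {V : Type*} (E : V → V → Prop) (σ : V → Bool)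
    (hbip : ∀ u v, E u v → σ u ≠ σ v) :
    ∀ k (x : ℕ → V), (∀ i < k, E (x i) (x (i + 1))) →
      (Even k → σ (x 0) = σ (x k)) ∧ (Odd k → σ (x 0) ≠ σ (x k)) := by
  intro k
  induction k with
  | zero => intro x _; simp
  | succ n ih =>
    intro x hx
    have hlast := hbip _ _ (hx n (by omega))
    rcases ih x (fun i hi => hx i (by omega)) with ⟨he, ho⟩
    constructor
    · intro hev
      have hn : Odd n := by
        rcases Nat.even_or_odd n with h | h
        · exact absurd (by simpa using h.add_one) (by simpa using hev)
        · exact h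
      have := ho hn
      revert this hlast
      cases σ (x 0) <;> cases σ (x n) <;> cases σ (x (n + 1)) <;> simp
    · intro hodd
      have hn : Even n := by
        rcases Nat.even_or_odd n with h | h
        · exact h
        · exact absurd (by simpa using h.add_one) (by simpa [Nat.odd_add_one] using hodd)
      have := he hn
      revert this hlast
      cases σ (x 0) <;> cases σ (x n) <;> cases σ (x (n + 1)) <;> simp

theorem stmt_13 {V : Type*} (E : V → V → Prop) (σ : V → Bool)
    (hirr : ∀ u, ¬ E u u) (hbip : ∀ u v, E u v → σ u ≠ σ v)
    (hbt : BiTrans E) (hN1 : N1prop E) (hsf : SinkFree E)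
    (u v : V) (hcol : σ u ≠ σ v) (hind1 : ¬ E u v) (hind2 : ¬ E v u) :
    ∀ w, ¬ (SConn E u w ∧ SConn E v w) := by
  rintro w ⟨⟨k1, x1, hk1, hx10, hx1k, hx1e⟩, ⟨k2, x2, hk2, hx20, hx2k, hx2e⟩⟩
  have key1 := walk_key E hbt k1 x1 hk1 hx1e
  have key2 := walk_key E hbt k2 x2 hk2 hx2e
  have col1 := walk_color E σ hbip k1 x1 hx1e
  have col2 := walk_color E σ hbip k2 x2 hx2e
  rw [hx10, hx1k] at key1 col1
  rw [hx20, hx2k] at key2 col2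
  have hN := hN1 u v hind1 hind2
  rcases key1 with ⟨ho1, he1⟩ | ⟨hev1, y1, hy11, hy12⟩ <;>
    rcases key2 with ⟨ho2, he2⟩ | ⟨hev2, y2, hy21, hy22⟩
  · -- both odd: σ u ≠ σ w, σ v ≠ σ w, contradiction with hcol
    have h1 := col1.2 ho1
    have h2 := col2.2 ho2
    revert h1 h2 hcol
    cases σ u <;> cases σ v <;> cases σ w <;> simp
  · -- u odd edge, v even: w ∈ Nout u ∩ NoutSet (Nout v)
    have : w ∈ Nout E u ∩ NoutSet E (Nout E v) := ⟨he1, y2, hy21, hy22⟩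
    rw [hN.1] at this
    exact this
  · have : w ∈ Nout E v ∩ NoutSet E (Nout E u) := ⟨he2, y1, hy11, hy12⟩
    rw [hN.2] at this
    exact this
  · -- both even: σ u = σ w = σ v, contradiction
    have h1 := col1.1 hev1
    have h2 := col2.1 hev2
    exact hcol (h1.trans h2.symm)
end

section
/- Let Δ = (V, E, σ) be a bi-transitive 2-colored bipartite digraph satisfying properties N1 and N4 (sink-free). Let u and v be independent vertices (¬E u v and ¬E v u) with N(u) ∩ N(v) = ∅. Then for every vertex w, u and v are not both strongly connected to w. -/
/-- Any directed walk of length ≥ 1 collapses (by bi-transitivity) to an edge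
or a path of length 2. -/
lemma sconn_collapse {V : Type*} {E : V → V → Prop} (hbt : BiTrans E) {u w : V}
    (h : SConn E u w) : E u w ∨ ∃ z, E u z ∧ E z w := by
  have aux : ∀ k : ℕ, ∀ x : ℕ → V, 1 ≤ k → (∀ i < k, E (x i) (x (i + 1))) →
      E (x 0) (x k) ∨ ∃ z, E (x 0) z ∧ E z (x k) := by
    intro k
    induction k using Nat.strong_induction_on with
    | _ k ih =>
      intro x hk he
      match k, hk with
      | 1, _ => exact Or.inl (he 0 (by omega))
      | 2, _ => exact Or.inr ⟨x 1, he 0 (by omega), he 1 (by omega)⟩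
      | (m + 3), _ =>
        set y : ℕ → V := fun i => if i = 0 then x 0 else x (i + 2) with hy
        have h0 : y 0 = x 0 := by simp [hy]
        have hend : y (m + 1) = x (m + 3) := by simp [hy]
        have he' : ∀ i < m + 1, E (y i) (y (i + 1)) := by
          intro i hi
          rcases Nat.eq_zero_or_pos i with h | h
          · subst h
            simp only [hy, if_pos rfl, if_neg one_ne_zero]
            exact hbt _ _ _ _ (he 0 (by omega)) (he 1 (by omega)) (he 2 (by omega))
          · have : i ≠ 0 := by omega
            simp only [hy, if_neg this, if_neg (by omega : i + 1 ≠ 0)]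
            exact he (i + 2) (by omega)
        have := ih (m + 1) (by omega) y (by omega) he'
        rw [h0, hend] at this
        exact this
  obtain ⟨k, x, hk, h0, hkw, he⟩ := h
  have := aux k x hk he
  rw [h0, hkw] at this
  exact this

theorem stmt_14 {V : Type*} (E : V → V → Prop) (σ : V → Bool)
    (hirr : ∀ u, ¬ E u u) (hbip : ∀ u v, E u v → σ u ≠ σ v)
    (hbt : BiTrans E) (hN1 : N1prop E) (hsf : SinkFree E)
    (u v : V) (hind1 : ¬ E u v) (hind2 : ¬ E v u)
    (hdisj : Nout E u ∩ Nout E v = ∅) :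
    ∀ w, ¬ (SConn E u w ∧ SConn E v w) := by
  intro w ⟨hu, hv⟩
  have hu' := sconn_collapse hbt hu
  have hv' := sconn_collapse hbt hv
  have hN1uv := hN1 u v hind1 hind2
  rcases hu' with huw | ⟨z, huz, hzw⟩ <;> rcases hv' with hvw | ⟨z', hvz', hz'w⟩
  · have : w ∈ Nout E u ∩ Nout E v := ⟨huw, hvw⟩
    rw [hdisj] at this; exact this
  · have : w ∈ Nout E u ∩ NoutSet E (Nout E v) := ⟨huw, z', hvz', hz'w⟩
    rw [hN1uv.1] at this; exact this
  · have : w ∈ Nout E v ∩ NoutSet E (Nout E u) := ⟨hvw, z, huz, hzw⟩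
    rw [hN1uv.2] at this; exact this
  · obtain ⟨t, hwt⟩ := hsf w
    have hut : E u t := hbt _ _ _ _ huz hzw hwt
    have hvt : E v t := hbt _ _ _ _ hvz' hz'w hwt
    have : t ∈ Nout E u ∩ Nout E v := ⟨hut, hvt⟩
    rw [hdisj] at this; exact this
end

section
/- Let Δ = (V, E, σ) be a bi-transitive 2-colored bipartite digraph satisfying properties N3 and N4 (sink-free). Let u and v be vertices that are not equivalent, with N(u) ∩ N(v) ≠ ∅, and suppose there is no vertex w with E u w and E w v, and no vertex w with E v w and E w u (i.e., there is no directed path of length 2 from u to v or from v to u). Then at least one of u, v is not the endpoint of a symmetric edge: there is no vertex w with E u w and E w u, or there is no vertex w with E v w and E w v. -/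
theorem stmt_15 {V : Type*} (E : V → V → Prop) (σ : V → Bool)
    (hirr : ∀ u, ¬ E u u) (hbip : ∀ u v, E u v → σ u ≠ σ v)
    (hbt : BiTrans E) (hN3 : N3prop E) (hsf : SinkFree E)
    (u v : V) (hneq : ¬ EquivVert E u v)
    (hcommon : (Nout E u ∩ Nout E v).Nonempty)
    (hnouv : ¬ ∃ w, E u w ∧ E w v)
    (hnovu : ¬ ∃ w, E v w ∧ E w u) :
    (¬ ∃ w, E u w ∧ E w u) ∨ (¬ ∃ w, E v w ∧ E w v) := by
  have h1 : u ∉ NoutSet E (Nout E v) := by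
    rintro ⟨s, hs, hsu⟩; exact hnovu ⟨s, hs, hsu⟩
  have h2 : v ∉ NoutSet E (Nout E u) := by
    rintro ⟨s, hs, hsv⟩; exact hnouv ⟨s, hs, hsv⟩
  obtain ⟨hin, -⟩ := hN3 u v h1 h2 hcommon
  left
  rintro ⟨w, huw, hwu⟩
  have hwv : E w v := by
    have : w ∈ Nin E u := hwu
    rw [hin] at this; exact this
  exact hnouv ⟨w, huw, hwv⟩
end

section
/- Let (V, E, σ) be a 2-cBMG in which no two symmetric edges have a common endpoint (i.e., whenever E u v₁, E v₁ u, E u v₂ and E v₂ u all hold, v₁ = v₂). Let (V, E′) be a ∼-consistent underlying oriented digraph of it, and let m be a vertex with no out-neighbor with respect to E′. Then there is a unique vertex ℓ with E m ℓ (that is, N(m) = {ℓ}), and moreover E ℓ m also holds, so {ℓ, m} is a symmetric edge. -/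
theorem stmt_17 {V : Type*} (E : V → V → Prop) (σ : V → Bool)
    (hirr : ∀ u, ¬ E u u) (hbip : ∀ u v, E u v → σ u ≠ σ v)
    (hN1 : N1prop E) (hN2 : BiTrans E) (hN3 : N3prop E) (hN4 : SinkFree E)
    (hsym : ∀ u v₁ v₂, E u v₁ → E v₁ u → E u v₂ → E v₂ u → v₁ = v₂)
    (E' : V → V → Prop)
    (hsub : ∀ u v, E' u v → E u v)
    (horient : ∀ u v, E' u v → ¬ E' v u)
    (hcover : ∀ u v, E u v → E' u v ∨ E' v u)
    (hcons : ∀ u u' v v', EquivVert E u u' → EquivVert E v v' → (E' u v ↔ E' u' v'))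
    (m : V) (hm : ∀ v, ¬ E' m v) :
    ∃ ℓ, Nout E m = {ℓ} ∧ E ℓ m := by
  obtain ⟨ℓ, hℓ⟩ := hN4 m
  have back : ∀ v, E m v → E v m := by
    intro v hv
    rcases hcover m v hv with h | h
    · exact absurd h (hm v)
    · exact hsub v m h
  refine ⟨ℓ, ?_, back ℓ hℓ⟩
  ext v
  simp only [Set.mem_singleton_iff]
  constructor
  · intro hv
    exact (hsym m ℓ v hℓ (back ℓ hℓ) hv (back v hv)).symm
  · rintro rfl; exact hℓ
end

section
/- Let (V, E, σ) be a 2-cBMG and let x₀, x₁, …, xₙ (n ≥ 1) be vertices such that each consecutive pair forms a symmetric edge (E xᵢ xᵢ₊₁ and E xᵢ₊₁ xᵢ for all 0 ≤ i < n), and suppose σ(x₀) ≠ σ(xₙ). Then {x₀, xₙ} is a symmetric edge: both E x₀ xₙ and E xₙ x₀ hold. (Consequently, every connected component of the undirected graph whose edges are the symmetric edges of the 2-cBMG is a complete bipartite graph.) -/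
theorem stmt_18 {V : Type*} (E : V → V → Prop) (σ : V → Bool)
    (hirr : ∀ u, ¬ E u u) (hbip : ∀ u v, E u v → σ u ≠ σ v)
    (hN1 : N1prop E) (hN2 : BiTrans E) (hN3 : N3prop E) (hN4 : SinkFree E)
    (n : ℕ) (hn : 1 ≤ n) (x : ℕ → V)
    (hchain : ∀ i < n, E (x i) (x (i + 1)) ∧ E (x (i + 1)) (x i))
    (hcol : σ (x 0) ≠ σ (x n)) :
    E (x 0) (x n) ∧ E (x n) (x 0) := by
  -- step 1: colors alternate, so n is odd
  have hpar : ∀ i ≤ n, σ (x i) = (if i % 2 = 0 then σ (x 0) else !(σ (x 0))) := by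
    intro i hi
    induction i with
    | zero => simp
    | succ k ih =>
      have hk : k < n := Nat.lt_of_succ_le hi
      have hne := hbip _ _ (hchain k hk).1
      have hσ : σ (x (k+1)) = !(σ (x k)) := by
        cases h1 : σ (x k) <;> cases h2 : σ (x (k+1)) <;> simp_all
      rw [hσ, ih (le_of_lt hk)]
      rcases Nat.even_or_odd k with he | ho
      · have h1 : k % 2 = 0 := Nat.even_iff.mp he
        have h2 : (k+1) % 2 = 1 := by omega
        simp [h1, h2]
      · have h1 : k % 2 = 1 := Nat.odd_iff.mp ho
        have h2 : (k+1) % 2 = 0 := by omega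
        simp [h1, h2]
  have hodd : n % 2 = 1 := by
    by_contra h
    have h0 : n % 2 = 0 := by omega
    have := hpar n le_rfl
    rw [h0] at this
    simp at this
    exact hcol this.symm
  obtain ⟨m, hm⟩ : ∃ m, n = 2 * m + 1 := ⟨n / 2, by omega⟩
  -- step 2: induction on m
  have key : ∀ m, 2 * m + 1 ≤ n → E (x 0) (x (2*m+1)) ∧ E (x (2*m+1)) (x 0) := by
    intro m
    induction m with
    | zero => intro h; simpa using hchain 0 (by omega)
    | succ k ih =>
      intro h
      obtain ⟨h1, h2⟩ := ih (by omega)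
      have ha := hchain (2*k+1) (by omega)
      have hb := hchain (2*k+2) (by omega)
      have e1 : E (x 0) (x (2*k+1+1+1)) := hN2 _ _ _ _ h1 ha.1 hb.1
      have e2 : E (x (2*k+1+1+1)) (x 0) := hN2 _ _ _ _ hb.2 ha.2 h2
      constructor
      · have : 2*(k+1)+1 = 2*k+1+1+1 := by ring
        rw [this]; exact e1
      · have : 2*(k+1)+1 = 2*k+1+1+1 := by ring
        rw [this]; exact e2
  have := key m (by omega)
  rw [hm]
  exact this
end

section
/- Let m ≥ 1 and let V be a set partitioned into 2m pairwise disjoint nonempty subsets U₁, W₁, …, U_m, W_m. Define σ(x) = 0 for x in U = U₁ ∪ ⋯ ∪ U_m and σ(x) = 1 for x in W = W₁ ∪ ⋯ ∪ W_m, and define the edge relation E by: E x y holds if and only if σ(x) ≠ σ(y) and either x and y lie in the same block pair (x ∈ Uᵢ and y ∈ Wᵢ, or x ∈ Wᵢ and y ∈ Uᵢ, for some i) or x ∈ U₁ ∪ W₁. Then (V, E, σ) is a 2-cBMG: it satisfies properties N1, N2, N3 and N4. -/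
theorem stmt_19 {V : Type*} (E : V → V → Prop) (σ : V → Bool)
    (m : ℕ) (hm : 1 ≤ m) (U W : ℕ → Set V)
    (hUne : ∀ i < m, (U i).Nonempty) (hWne : ∀ i < m, (W i).Nonempty)
    (hUU : ∀ i < m, ∀ j < m, i ≠ j → U i ∩ U j = ∅)
    (hWW : ∀ i < m, ∀ j < m, i ≠ j → W i ∩ W j = ∅)
    (hUW : ∀ i < m, ∀ j < m, U i ∩ W j = ∅)
    (hcover : ∀ x : V, (∃ i < m, x ∈ U i) ∨ (∃ i < m, x ∈ W i))
    (hσU : ∀ i < m, ∀ x ∈ U i, σ x = false)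
    (hσW : ∀ i < m, ∀ x ∈ W i, σ x = true)
    (hE : ∀ x y, E x y ↔ (σ x ≠ σ y ∧
      ((∃ i < m, (x ∈ U i ∧ y ∈ W i) ∨ (x ∈ W i ∧ y ∈ U i)) ∨ x ∈ U 0 ∪ W 0))) :
    (∀ u, ¬ E u u) ∧ (∀ u v, E u v → σ u ≠ σ v) ∧
    N1prop E ∧ BiTrans E ∧ N3prop E ∧ SinkFree E := by
 
  have h0m : 0 < m := hm
  have bool3 : ∀ a b c : Bool, a ≠ c → b ≠ c → a = b := by decide
  have bool4 : ∀ a b c d : Bool, a ≠ b → b ≠ c → c ≠ d → a ≠ d := by decide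
  have bne2 : ∀ a b : Bool, a ≠ b → a = false → b = true := by decide
  have bne1 : ∀ a b : Bool, a ≠ b → a = true → b = false := by decide
  have sideU : ∀ i, i < m → ∀ j, j < m → ∀ x, x ∈ U i → x ∈ W j → False := by
    intro i hi j hj x hx hx'
    have h1 := hσU i hi x hx
    have h2 := hσW j hj x hx'
    rw [h1] at h2
    exact Bool.false_ne_true h2
  have uniqU : ∀ i, i < m → ∀ j, j < m → ∀ x, x ∈ U i → x ∈ U j → i = j := by
    intro i hi j hj x hx hx'
    by_contra h
    have h2 := hUU i hi j hj h
    have h3 : x ∈ U i ∩ U j := ⟨hx, hx'⟩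
    rw [h2] at h3
    exact h3
  have uniqW : ∀ i, i < m → ∀ j, j < m → ∀ x, x ∈ W i → x ∈ W j → i = j := by
    intro i hi j hj x hx hx'
    by_contra h
    have h2 := hWW i hi j hj h
    have h3 : x ∈ W i ∩ W j := ⟨hx, hx'⟩
    rw [h2] at h3
    exact h3
  have covU : ∀ x, σ x = false → ∃ i, i < m ∧ x ∈ U i := by
    intro x hx
    rcases hcover x with ⟨i, hi, h⟩ | ⟨i, hi, h⟩
    · exact ⟨i, hi, h⟩
    · have := hσW i hi x h
      rw [hx] at this
      exact absurd this (by simp)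
  have covW : ∀ x, σ x = true → ∃ i, i < m ∧ x ∈ W i := by
    intro x hx
    rcases hcover x with ⟨i, hi, h⟩ | ⟨i, hi, h⟩
    · have := hσU i hi x h
      rw [hx] at this
      exact absurd this (by simp)
    · exact ⟨i, hi, h⟩
  have sbU : ∀ x y i, i < m → x ∈ U i →
      (∃ k, k < m ∧ ((x ∈ U k ∧ y ∈ W k) ∨ (x ∈ W k ∧ y ∈ U k))) → y ∈ W i := by
    rintro x y i hi hx ⟨k, hk, ⟨h1, h2⟩ | ⟨h1, h2⟩⟩
    · rwa [uniqU i hi k hk x hx h1]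
    · exact (sideU i hi k hk x hx h1).elim
  have sbW : ∀ x y i, i < m → x ∈ W i →
      (∃ k, k < m ∧ ((x ∈ U k ∧ y ∈ W k) ∨ (x ∈ W k ∧ y ∈ U k))) → y ∈ U i := by
    rintro x y i hi hx ⟨k, hk, ⟨h1, h2⟩ | ⟨h1, h2⟩⟩
    · exact (sideU k hk i hi x h1 hx).elim
    · rwa [uniqW i hi k hk x hx h1]
  have edgeU : ∀ x y i, i < m → i ≠ 0 → x ∈ U i → E x y → y ∈ W i := by
    intro x y i hi hi0 hx hxy
    rcases (hE x y).mp hxy with ⟨_, hb | hb⟩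
    · exact sbU x y i hi hx hb
    · rcases hb with h0 | h0
      · exact absurd (uniqU i hi 0 h0m x hx h0) hi0
      · exact (sideU i hi 0 h0m x hx h0).elim
  have edgeW : ∀ x y i, i < m → i ≠ 0 → x ∈ W i → E x y → y ∈ U i := by
    intro x y i hi hi0 hx hxy
    rcases (hE x y).mp hxy with ⟨_, hb | hb⟩
    · exact sbW x y i hi hx hb
    · rcases hb with h0 | h0
      · exact (sideU 0 h0m i hi x h0 hx).elim
      · exact absurd (uniqW i hi 0 h0m x hx h0) hi0
  have hirr : ∀ u, ¬ E u u := fun u h => ((hE u u).mp h).1 rfl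
  have hsig : ∀ u v, E u v → σ u ≠ σ v := fun u v h => ((hE u v).mp h).1
  have key : ∀ u v, ¬ E u v → ¬ E v u → Nout E u ∩ NoutSet E (Nout E v) = ∅ := by
    intro u v huv hvu
    rw [Set.eq_empty_iff_forall_notMem]
    intro w hw
    simp only [Nout, NoutSet, Set.mem_inter_iff, Set.mem_setOf_eq] at hw
    obtain ⟨hw1, t, ht1, ht2⟩ := hw
    have s1 : σ u ≠ σ w := hsig u w hw1
    have s2 : σ v ≠ σ t := hsig v t ht1
    have s3 : σ t ≠ σ w := hsig t w ht2
    have svw : σ v = σ w := bool3 _ _ _ s2 (Ne.symm s3)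
    have suv : σ u ≠ σ v := by rw [svw]; exact s1
    have hnb1 : ¬ ((∃ i, i < m ∧ ((u ∈ U i ∧ v ∈ W i) ∨ (u ∈ W i ∧ v ∈ U i))) ∨ u ∈ U 0 ∪ W 0) :=
      fun h => huv ((hE u v).mpr ⟨suv, h⟩)
    have hnb2 : ¬ ((∃ i, i < m ∧ ((v ∈ U i ∧ u ∈ W i) ∨ (v ∈ W i ∧ u ∈ U i))) ∨ v ∈ U 0 ∪ W 0) :=
      fun h => hvu ((hE v u).mpr ⟨Ne.symm suv, h⟩)
    have hu0U : u ∉ U 0 := fun h => hnb1 (Or.inr (Set.mem_union_left _ h))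
    have hu0W : u ∉ W 0 := fun h => hnb1 (Or.inr (Set.mem_union_right _ h))
    have hv0U : v ∉ U 0 := fun h => hnb2 (Or.inr (Set.mem_union_left _ h))
    have hv0W : v ∉ W 0 := fun h => hnb2 (Or.inr (Set.mem_union_right _ h))
    cases hσu : σ u with
    | false =>
      have hσv : σ v = true := bne2 _ _ suv hσu
      obtain ⟨i, hi, hui⟩ := covU u hσu
      obtain ⟨j, hj, hvj⟩ := covW v hσv
      have hi0 : i ≠ 0 := fun h => hu0U (h ▸ hui)
      have hj0 : j ≠ 0 := fun h => hv0W (h ▸ hvj)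
      have hwWi : w ∈ W i := edgeU u w i hi hi0 hui hw1
      have htUj : t ∈ U j := edgeW v t j hj hj0 hvj ht1
      have hwWj : w ∈ W j := edgeU t w j hj hj0 htUj ht2
      have hij : i = j := uniqW i hi j hj w hwWi hwWj
      exact huv ((hE u v).mpr ⟨suv, Or.inl ⟨i, hi, Or.inl ⟨hui, by rw [hij]; exact hvj⟩⟩⟩)
    | true =>
      have hσv : σ v = false := bne1 _ _ suv hσu
      obtain ⟨i, hi, hui⟩ := covW u hσu
      obtain ⟨j, hj, hvj⟩ := covU v hσv
      have hi0 : i ≠ 0 := fun h => hu0W (h ▸ hui)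
      have hj0 : j ≠ 0 := fun h => hv0U (h ▸ hvj)
      have hwUi : w ∈ U i := edgeW u w i hi hi0 hui hw1
      have htWj : t ∈ W j := edgeU v t j hj hj0 hvj ht1
      have hwUj : w ∈ U j := edgeW t w j hj hj0 htWj ht2
      have hij : i = j := uniqU i hi j hj w hwUi hwUj
      exact huv ((hE u v).mpr ⟨suv, Or.inl ⟨i, hi, Or.inr ⟨hui, by rw [hij]; exact hvj⟩⟩⟩)
  have hN2 : BiTrans E := by
    intro u1 v1 u2 v2 h1 h2 h3
    have s1 := hsig _ _ h1
    have s2 := hsig _ _ h2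
    have s3 := hsig _ _ h3
    have s : σ u1 ≠ σ v2 := bool4 _ _ _ _ s1 s2 s3
    rcases (hE u1 v1).mp h1 with ⟨_, hb | hb0⟩
    · obtain ⟨i, hi, hc⟩ := hb
      rcases hc with ⟨hu1, hv1⟩ | ⟨hu1, hv1⟩
      · rcases (hE v1 u2).mp h2 with ⟨_, hb2 | hb20⟩
        · have hu2 : u2 ∈ U i := sbW v1 u2 i hi hv1 hb2
          rcases (hE u2 v2).mp h3 with ⟨_, hb3 | hb30⟩
          · have hv2 : v2 ∈ W i := sbU u2 v2 i hi hu2 hb3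
            exact (hE u1 v2).mpr ⟨s, Or.inl ⟨i, hi, Or.inl ⟨hu1, hv2⟩⟩⟩
          · rcases hb30 with h0 | h0
            · have hI : i = 0 := uniqU i hi 0 h0m u2 hu2 h0
              exact (hE u1 v2).mpr ⟨s, Or.inr (Set.mem_union_left _ (hI ▸ hu1))⟩
            · exact (sideU i hi 0 h0m u2 hu2 h0).elim
        · rcases hb20 with h0 | h0
          · exact (sideU 0 h0m i hi v1 h0 hv1).elim
          · have hI : i = 0 := uniqW i hi 0 h0m v1 hv1 h0
            exact (hE u1 v2).mpr ⟨s, Or.inr (Set.mem_union_left _ (hI ▸ hu1))⟩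
      · rcases (hE v1 u2).mp h2 with ⟨_, hb2 | hb20⟩
        · have hu2 : u2 ∈ W i := sbU v1 u2 i hi hv1 hb2
          rcases (hE u2 v2).mp h3 with ⟨_, hb3 | hb30⟩
          · have hv2 : v2 ∈ U i := sbW u2 v2 i hi hu2 hb3
            exact (hE u1 v2).mpr ⟨s, Or.inl ⟨i, hi, Or.inr ⟨hu1, hv2⟩⟩⟩
          · rcases hb30 with h0 | h0
            · exact (sideU 0 h0m i hi u2 h0 hu2).elim
            · have hI : i = 0 := uniqW i hi 0 h0m u2 hu2 h0
              exact (hE u1 v2).mpr ⟨s, Or.inr (Set.mem_union_right _ (hI ▸ hu1))⟩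
        · rcases hb20 with h0 | h0
          · have hI : i = 0 := uniqU i hi 0 h0m v1 hv1 h0
            exact (hE u1 v2).mpr ⟨s, Or.inr (Set.mem_union_right _ (hI ▸ hu1))⟩
          · exact (sideU i hi 0 h0m v1 hv1 h0).elim
    · exact (hE u1 v2).mpr ⟨s, Or.inr hb0⟩
  have hN3 : N3prop E := by
    rintro u v h1 h2 ⟨w, hw⟩
    exfalso
    simp only [Nout, Set.mem_inter_iff, Set.mem_setOf_eq] at hw
    obtain ⟨hw1, hw2⟩ := hw
    simp only [NoutSet, Nout, Set.mem_setOf_eq] at h1 h2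
    have s1 := hsig u w hw1
    have s2 := hsig v w hw2
    have suv : σ u = σ v := bool3 _ _ _ s1 s2
    have claimU : ∀ a b k, k < m → a ∈ U k → b ∈ U 0 → ∃ s, E b s ∧ E s a := by
      intro a b k hk ha hb
      obtain ⟨w', hw'⟩ := hWne k hk
      have e1 : E b w' := (hE b w').mpr ⟨by
          rw [hσU 0 h0m b hb, hσW k hk w' hw']; simp,
        Or.inr (Set.mem_union_left _ hb)⟩
      have e2 : E w' a := (hE w' a).mpr ⟨by
          rw [hσW k hk w' hw', hσU k hk a ha]; simp,
        Or.inl ⟨k, hk, Or.inr ⟨hw', ha⟩⟩⟩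
      exact ⟨w', e1, e2⟩
    have claimW : ∀ a b k, k < m → a ∈ W k → b ∈ W 0 → ∃ s, E b s ∧ E s a := by
      intro a b k hk ha hb
      obtain ⟨w', hw'⟩ := hUne k hk
      have e1 : E b w' := (hE b w').mpr ⟨by
          rw [hσW 0 h0m b hb, hσU k hk w' hw']; simp,
        Or.inr (Set.mem_union_right _ hb)⟩
      have e2 : E w' a := (hE w' a).mpr ⟨by
          rw [hσU k hk w' hw', hσW k hk a ha]; simp,
        Or.inl ⟨k, hk, Or.inl ⟨hw', ha⟩⟩⟩
      exact ⟨w', e1, e2⟩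
    cases hσu : σ u with
    | false =>
      have hσv : σ v = false := by rw [← suv]; exact hσu
      obtain ⟨i, hi, hui⟩ := covU u hσu
      obtain ⟨j, hj, hvj⟩ := covU v hσv
      by_cases hj0 : j = 0
      · exact h1 (claimU u v i hi hui (hj0 ▸ hvj))
      by_cases hi0 : i = 0
      · exact h2 (claimU v u j hj hvj (hi0 ▸ hui))
      have hwWi : w ∈ W i := edgeU u w i hi hi0 hui hw1
      have hwWj : w ∈ W j := edgeU v w j hj hj0 hvj hw2
      have hij : i = j := uniqW i hi j hj w hwWi hwWj
      have ewu : E w u := (hE w u).mpr ⟨by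
          rw [hσW i hi w hwWi, hσu]; simp,
        Or.inl ⟨i, hi, Or.inr ⟨hwWi, hui⟩⟩⟩
      exact h1 ⟨w, hw2, ewu⟩
    | true =>
      have hσv : σ v = true := by rw [← suv]; exact hσu
      obtain ⟨i, hi, hui⟩ := covW u hσu
      obtain ⟨j, hj, hvj⟩ := covW v hσv
      by_cases hj0 : j = 0
      · exact h1 (claimW u v i hi hui (hj0 ▸ hvj))
      by_cases hi0 : i = 0
      · exact h2 (claimW v u j hj hvj (hi0 ▸ hui))
      have hwUi : w ∈ U i := edgeW u w i hi hi0 hui hw1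
      have hwUj : w ∈ U j := edgeW v w j hj hj0 hvj hw2
      have hij : i = j := uniqU i hi j hj w hwUi hwUj
      have ewu : E w u := (hE w u).mpr ⟨by
          rw [hσU i hi w hwUi, hσu]; simp,
        Or.inl ⟨i, hi, Or.inl ⟨hwUi, hui⟩⟩⟩
      exact h1 ⟨w, hw2, ewu⟩
  have hN4 : SinkFree E := by
    intro x
    rcases hcover x with ⟨i, hi, h⟩ | ⟨i, hi, h⟩
    · obtain ⟨y, hy⟩ := hWne i hi
      exact ⟨y, (hE x y).mpr ⟨by rw [hσU i hi x h, hσW i hi y hy]; simp,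
        Or.inl ⟨i, hi, Or.inl ⟨h, hy⟩⟩⟩⟩
    · obtain ⟨y, hy⟩ := hUne i hi
      exact ⟨y, (hE x y).mpr ⟨by rw [hσW i hi x h, hσU i hi y hy]; simp,
        Or.inl ⟨i, hi, Or.inr ⟨h, hy⟩⟩⟩⟩
  exact ⟨hirr, hsig, fun u v huv hvu => ⟨key u v huv hvu, key v u hvu huv⟩, hN2, hN3, hN4⟩
end
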